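/- For every nonzero integral ideal 𝔫 = 𝔫₀𝔫₁² of 𝒪, the 𝒩-transform of the arithmetic function 𝔪 ↦ log N(𝔪) satisfies 𝒩[log N](𝔫) = (∏_{v ∈ S(𝔫₁)∖S₂(𝔫)} (1 − q_v^{−2})) · (∏_{v ∈ S₂(𝔫)} (1 − (q_v² − q_v)^{−1})) · ( log N(𝔫) + Σ_{v ∈ S(𝔫₁)∖S₂(𝔫)} 2·log q_v/(q_v² − 1) + Σ_{v ∈ S₂(𝔫)} 2·log q_v/(q_v² − q_v − 1) ). -/

import Mathlib

/-!
For `I ⊆ S(𝔫₁)` put `𝔪 = 𝔫 ∏_{v∈I} 𝔭_v⁻²`. Writing `ι(𝔪) = N(𝔪) ∏_{v∈S(𝔪)} (1 + q_v⁻¹)`, the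
summand of `𝒩[log N](𝔫)` indexed by `I` factors as `(∏_{v∈I} c_v) (log N(𝔫) - ∑_{v∈I} 2 log q_v)`,
where `c_v = -1/(q_v² - q_v)` if `ord_v(𝔫) = 2` (then `v` leaves `S(𝔪)` and
`ω_v(𝔫₀) = (q_v+1)/(q_v-1)`) and `c_v = -1/q_v²` otherwise. Summing over all subsets of a finite
set, `∑_I (∏_I c)(L - ∑_I a) = ∏ (1 + c) · (L - ∑ a c / (1 + c))`, which is the claimed formula.
-/

open NumberField UniqueFactorizationMonoid
open scoped Classical

namespace Stmt2

variable (F : Type*) [Field F] [NumberField F]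

/-- `S(𝔪)`: the set of prime ideals dividing `𝔪`. -/
noncomputable def S (𝔪 : Ideal (𝓞 F)) : Finset (Ideal (𝓞 F)) :=
  (normalizedFactors 𝔪).toFinset

/-- `ord_v(𝔪)`: the exponent of the prime `v` in `𝔪`. -/
noncomputable def ordv (v 𝔪 : Ideal (𝓞 F)) : ℕ :=
  (normalizedFactors 𝔪).count v

/-- `S_k(𝔪) = {v ∈ S(𝔪) : ord_v(𝔪) = k}`. -/
noncomputable def Sk (k : ℕ) (𝔪 : Ideal (𝓞 F)) : Finset (Ideal (𝓞 F)) :=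
  (S F 𝔪).filter fun v => ordv F v 𝔪 = k

/-- `q_v`: the cardinality of the residue field `𝒪/𝔭_v`, as a real number. -/
noncomputable def qv (v : Ideal (𝓞 F)) : ℝ := (Ideal.absNorm v : ℝ)

/-- `ω_v(𝔠) = 1` if `v ∈ S(𝔠)`, and `(q_v+1)/(q_v−1)` otherwise. -/
noncomputable def omegav (v 𝔠 : Ideal (𝓞 F)) : ℝ :=
  if v ∈ S F 𝔠 then 1 else (qv F v + 1) / (qv F v - 1)

/-- The quotient ideal `𝔫𝔟⁻¹` when `𝔟 ∣ 𝔫` (junk value `0` otherwise). -/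
noncomputable def idealDiv (𝔫 𝔟 : Ideal (𝓞 F)) : Ideal (𝓞 F) :=
  if h : ∃ 𝔠, 𝔫 = 𝔟 * 𝔠 then h.choose else 0

/-- `𝔫₁`: the unique ideal with `𝔫 = 𝔫₀𝔫₁²`, `𝔫₀` squarefree. -/
noncomputable def nOne (𝔫 : Ideal (𝓞 F)) : Ideal (𝓞 F) :=
  ∏ v ∈ S F 𝔫, v ^ (ordv F v 𝔫 / 2)

/-- `𝔫₀`: the product of the primes occurring in `𝔫` with odd exponent. -/
noncomputable def nZero (𝔫 : Ideal (𝓞 F)) : Ideal (𝓞 F) :=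
  ∏ v ∈ S F 𝔫, v ^ (ordv F v 𝔫 % 2)

/-- `ι(𝔪) = ∏_{v∈S(𝔪)} (1+q_v)·q_v^{ord_v(𝔪)−1}`. -/
noncomputable def iota (𝔪 : Ideal (𝓞 F)) : ℝ :=
  ∏ v ∈ S F 𝔪, (1 + qv F v) * qv F v ^ (ordv F v 𝔪 - 1)

/-- The `𝒩`-transform of a real-valued arithmetic function `B`. -/
noncomputable def Ntrans (B : Ideal (𝓞 F) → ℝ) (𝔫 : Ideal (𝓞 F)) : ℝ :=
  ∑ I ∈ (S F (nOne F 𝔫)).powerset,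
    (-1 : ℝ) ^ I.card *
      (∏ v ∈ I ∩ Sk F 1 (nOne F 𝔫), omegav F v (nZero F 𝔫)) *
      (iota F (idealDiv F 𝔫 (∏ v ∈ I, v ^ 2)) / iota F 𝔫) *
      B (idealDiv F 𝔫 (∏ v ∈ I, v ^ 2))

variable {F}

theorem sum_powerset_prod_mul_sub_sum {ι K : Type*} [DecidableEq ι] [Field K] (T : Finset ι)
    (c a : ι → K) (L : K) (hc : ∀ v ∈ T, 1 + c v ≠ 0) :
    ∑ I ∈ T.powerset, (∏ v ∈ I, c v) * (L - ∑ v ∈ I, a v) =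
      (∏ v ∈ T, (1 + c v)) * (L - ∑ v ∈ T, a v * c v / (1 + c v)) := by
  -- the subsets containing `x` contribute `c x` times the sum over `s` taken at `L - a x`
  induction T using Finset.induction_on generalizing L with
  | empty => simp
  | @insert x s hx ih =>
    have hxc := hc x (Finset.mem_insert_self x s)
    have ih' := fun L => ih L fun v hv => hc v (Finset.mem_insert_of_mem hv)
    have h_insert : ∀ I ∈ s.powerset,
        (∏ v ∈ insert x I, c v) * (L - ∑ v ∈ insert x I, a v) =
          c x * ((∏ v ∈ I, c v) * (L - a x - ∑ v ∈ I, a v)) := by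
      intro I hI
      have hxI : x ∉ I := fun h => hx (Finset.mem_powerset.mp hI h)
      rw [Finset.prod_insert hxI, Finset.sum_insert hxI]
      ring
    rw [Finset.sum_powerset_insert hx, Finset.sum_congr rfl h_insert, ← Finset.mul_sum, ih', ih',
      Finset.prod_insert hx, Finset.sum_insert hx]
    field_simp
    ring

section Ideals

variable {𝔞 𝔟 𝔪 𝔫 v w : Ideal (𝓞 F)} {I : Finset (Ideal (𝓞 F))}

theorem mem_S_iff : v ∈ S F 𝔪 ↔ ordv F v 𝔪 ≠ 0 := by
  rw [S, Multiset.mem_toFinset, ordv, Ne, Multiset.count_eq_zero, not_not]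

theorem prime_of_mem_S (hv : v ∈ S F 𝔪) : Prime v :=
  prime_of_normalized_factor v (Multiset.mem_toFinset.mp hv)

theorem mem_Sk_iff {k : ℕ} : v ∈ Sk F k 𝔪 ↔ v ∈ S F 𝔪 ∧ ordv F v 𝔪 = k :=
  Finset.mem_filter

theorem two_le_qv (hv : Prime v) : 2 ≤ qv F v := by
  have h0 : Ideal.absNorm v ≠ 0 := Ideal.absNorm_eq_zero_iff.not.mpr hv.ne_zero
  have h1 : Ideal.absNorm v ≠ 1 :=
    Ideal.absNorm_eq_one_iff.not.mpr fun h => hv.not_isUnit (Ideal.isUnit_iff.mpr h)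
  rw [qv]
  exact_mod_cast (by omega : 2 ≤ Ideal.absNorm v)

theorem ordv_mul (h𝔞 : 𝔞 ≠ 0) (h𝔟 : 𝔟 ≠ 0) : ordv F v (𝔞 * 𝔟) = ordv F v 𝔞 + ordv F v 𝔟 := by
  rw [ordv, ordv, ordv, normalizedFactors_mul h𝔞 h𝔟, Multiset.count_add]

theorem ordv_prod_pow {s : Finset (Ideal (𝓞 F))} (hs : ∀ v ∈ s, Prime v) (e : Ideal (𝓞 F) → ℕ) :
    ordv F w (∏ v ∈ s, v ^ e v) = if w ∈ s then e w else 0 := by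
  have hprod : ∏ v ∈ s, v ^ e v = (∑ v ∈ s, Multiset.replicate (e v) v).prod := by
    simp [Multiset.prod_sum]
  rw [ordv, hprod, normalizedFactors_prod_of_prime, Multiset.count_sum']
  · simp [Multiset.count_replicate]
  · intro p hp
    obtain ⟨v, hv, hpv⟩ := Multiset.mem_sum.mp hp
    exact Multiset.eq_of_mem_replicate hpv ▸ hs v hv

theorem ordv_nOne : ordv F w (nOne F 𝔫) = ordv F w 𝔫 / 2 := by
  rw [nOne, ordv_prod_pow fun v hv => prime_of_mem_S hv]
  split_ifs with hw
  · rfl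
  · rw [mem_S_iff, not_not] at hw
    rw [hw]

theorem ordv_nZero : ordv F w (nZero F 𝔫) = ordv F w 𝔫 % 2 := by
  rw [nZero, ordv_prod_pow fun v hv => prime_of_mem_S hv]
  split_ifs with hw
  · rfl
  · rw [mem_S_iff, not_not] at hw
    rw [hw]

theorem mem_S_nOne : w ∈ S F (nOne F 𝔫) ↔ 2 ≤ ordv F w 𝔫 := by
  rw [mem_S_iff, ordv_nOne]
  omega

theorem mem_S_nZero : w ∈ S F (nZero F 𝔫) ↔ ordv F w 𝔫 % 2 = 1 := by
  rw [mem_S_iff, ordv_nZero]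
  omega

theorem mem_Sk_one_nOne : w ∈ Sk F 1 (nOne F 𝔫) ↔ ordv F w 𝔫 / 2 = 1 := by
  rw [mem_Sk_iff, mem_S_nOne, ordv_nOne]
  omega

theorem Sk_two_eq_filter : Sk F 2 𝔫 = (S F (nOne F 𝔫)).filter (ordv F · 𝔫 = 2) := by
  ext w
  rw [mem_Sk_iff, Finset.mem_filter, mem_S_iff, mem_S_nOne]
  omega

theorem S_nOne_subset : S F (nOne F 𝔫) ⊆ S F 𝔫 := fun w hw => by
  rw [mem_S_nOne] at hw
  rw [mem_S_iff]
  omega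

theorem prod_S_pow_ordv (h𝔪 : 𝔪 ≠ 0) : ∏ v ∈ S F 𝔪, v ^ ordv F v 𝔪 = 𝔪 :=
  (Finset.prod_multiset_count _).symm.trans (Ideal.prod_normalizedFactors_eq_self h𝔪)

theorem absNorm_eq_prod (h𝔪 : 𝔪 ≠ 0) :
    (Ideal.absNorm 𝔪 : ℝ) = ∏ v ∈ S F 𝔪, qv F v ^ ordv F v 𝔪 := by
  conv_lhs => rw [← prod_S_pow_ordv h𝔪]
  simp [qv]

theorem iota_eq (h𝔪 : 𝔪 ≠ 0) :
    iota F 𝔪 = Ideal.absNorm 𝔪 * ∏ v ∈ S F 𝔪, (1 + (qv F v)⁻¹) := by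
  rw [iota, absNorm_eq_prod h𝔪, ← Finset.prod_mul_distrib]
  refine Finset.prod_congr rfl fun v hv => ?_
  have hq : qv F v ≠ 0 := by linarith [two_le_qv (prime_of_mem_S hv)]
  obtain ⟨k, hk⟩ := Nat.exists_eq_succ_of_ne_zero (mem_S_iff.mp hv)
  rw [hk, Nat.succ_sub_one, pow_succ]
  field_simp
  ring

theorem prod_sq_dvd (h𝔫 : 𝔫 ≠ 0) (hI : I ⊆ S F (nOne F 𝔫)) : ∏ v ∈ I, v ^ 2 ∣ 𝔫 := by
  have hprime : ∀ v ∈ I, Prime v := fun v hv => prime_of_mem_S (hI hv)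
  have hne : ∏ v ∈ I, v ^ 2 ≠ 0 :=
    Finset.prod_ne_zero_iff.mpr fun v hv => pow_ne_zero 2 (hprime v hv).ne_zero
  rw [dvd_iff_normalizedFactors_le_normalizedFactors hne h𝔫, Multiset.le_iff_count]
  intro w
  change ordv F w _ ≤ ordv F w 𝔫
  rw [ordv_prod_pow hprime]
  split_ifs with hw
  · exact mem_S_nOne.mp (hI hw)
  · exact Nat.zero_le _

theorem prod_sq_mul_idealDiv (h𝔫 : 𝔫 ≠ 0) (hI : I ⊆ S F (nOne F 𝔫)) :
    (∏ v ∈ I, v ^ 2) * idealDiv F 𝔫 (∏ v ∈ I, v ^ 2) = 𝔫 := by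
  obtain ⟨𝔠, h𝔠⟩ := prod_sq_dvd h𝔫 hI
  rw [idealDiv, dif_pos ⟨𝔠, h𝔠⟩]
  exact (Exists.choose_spec (⟨𝔠, h𝔠⟩ : ∃ 𝔠, 𝔫 = _ * 𝔠)).symm

theorem idealDiv_ne_zero (h𝔫 : 𝔫 ≠ 0) (hI : I ⊆ S F (nOne F 𝔫)) :
    idealDiv F 𝔫 (∏ v ∈ I, v ^ 2) ≠ 0 :=
  right_ne_zero_of_mul ((prod_sq_mul_idealDiv h𝔫 hI).symm ▸ h𝔫)

theorem ordv_idealDiv (h𝔫 : 𝔫 ≠ 0) (hI : I ⊆ S F (nOne F 𝔫)) (w : Ideal (𝓞 F)) :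
    ordv F w (idealDiv F 𝔫 (∏ v ∈ I, v ^ 2)) = ordv F w 𝔫 - if w ∈ I then 2 else 0 := by
  have hmul := prod_sq_mul_idealDiv h𝔫 hI
  conv_rhs => rw [← hmul, ordv_mul (left_ne_zero_of_mul (hmul ▸ h𝔫)) (idealDiv_ne_zero h𝔫 hI),
    ordv_prod_pow fun v hv => prime_of_mem_S (hI hv)]
  split_ifs <;> omega

theorem S_idealDiv (h𝔫 : 𝔫 ≠ 0) (hI : I ⊆ S F (nOne F 𝔫)) :
    S F (idealDiv F 𝔫 (∏ v ∈ I, v ^ 2)) = S F 𝔫 \ I.filter (ordv F · 𝔫 = 2) := by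
  ext w
  rw [Finset.mem_sdiff, Finset.mem_filter, mem_S_iff, mem_S_iff, ordv_idealDiv h𝔫 hI]
  split_ifs with hw
  · have := mem_S_nOne.mp (hI hw)
    simp only [hw, true_and]
    omega
  · simp [hw]

theorem absNorm_eq_prod_mul_absNorm_idealDiv (h𝔫 : 𝔫 ≠ 0) (hI : I ⊆ S F (nOne F 𝔫)) :
    (Ideal.absNorm 𝔫 : ℝ) =
      (∏ v ∈ I, qv F v ^ 2) * Ideal.absNorm (idealDiv F 𝔫 (∏ v ∈ I, v ^ 2)) := by
  conv_lhs => rw [← prod_sq_mul_idealDiv h𝔫 hI]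
  simp [qv]

theorem iota_idealDiv_div_iota (h𝔫 : 𝔫 ≠ 0) (hI : I ⊆ S F (nOne F 𝔫)) :
    iota F (idealDiv F 𝔫 (∏ v ∈ I, v ^ 2)) / iota F 𝔫 =
      ∏ v ∈ I, (qv F v ^ 2)⁻¹ * if ordv F v 𝔫 = 2 then (1 + (qv F v)⁻¹)⁻¹ else 1 := by
  have hq : ∀ v ∈ S F 𝔫, 0 < qv F v := fun v hv => by linarith [two_le_qv (prime_of_mem_S hv)]
  have hIS : I ⊆ S F 𝔫 := hI.trans S_nOne_subset
  have hJ : I.filter (ordv F · 𝔫 = 2) ⊆ S F 𝔫 := (Finset.filter_subset _ _).trans hIS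
  rw [iota_eq h𝔫, iota_eq (idealDiv_ne_zero h𝔫 hI), S_idealDiv h𝔫 hI,
    absNorm_eq_prod_mul_absNorm_idealDiv h𝔫 hI, ← Finset.prod_sdiff hJ, Finset.prod_mul_distrib,
    ← Finset.prod_filter, Finset.prod_inv_distrib, Finset.prod_inv_distrib]
  have hN : (Ideal.absNorm (idealDiv F 𝔫 (∏ v ∈ I, v ^ 2)) : ℝ) ≠ 0 := by
    exact_mod_cast Ideal.absNorm_eq_zero_iff.not.mpr (idealDiv_ne_zero h𝔫 hI)
  have hP : ∀ s ⊆ S F 𝔫, ∏ v ∈ s, (1 + (qv F v)⁻¹) ≠ 0 := fun s hs =>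
    Finset.prod_ne_zero_iff.mpr fun v hv => by have := hq v (hs hv); positivity
  have hQ : ∏ v ∈ I, qv F v ^ 2 ≠ 0 :=
    Finset.prod_ne_zero_iff.mpr fun v hv => by have := hq v (hIS hv); positivity
  have hB := hP _ hJ
  have hA := hP (S F 𝔫 \ I.filter (ordv F · 𝔫 = 2)) Finset.sdiff_subset
  rw [div_eq_iff (mul_ne_zero (mul_ne_zero hQ hN) (mul_ne_zero hA hB))]
  grind

theorem log_absNorm_idealDiv (h𝔫 : 𝔫 ≠ 0) (hI : I ⊆ S F (nOne F 𝔫)) :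
    Real.log (Ideal.absNorm (idealDiv F 𝔫 (∏ v ∈ I, v ^ 2))) =
      Real.log (Ideal.absNorm 𝔫) - ∑ v ∈ I, 2 * Real.log (qv F v) := by
  have hq : ∀ v ∈ I, qv F v ^ 2 ≠ 0 := fun v hv => by
    have := two_le_qv (prime_of_mem_S (hI hv)); positivity
  have hN : (Ideal.absNorm (idealDiv F 𝔫 (∏ v ∈ I, v ^ 2)) : ℝ) ≠ 0 := by
    exact_mod_cast Ideal.absNorm_eq_zero_iff.not.mpr (idealDiv_ne_zero h𝔫 hI)
  rw [absNorm_eq_prod_mul_absNorm_idealDiv h𝔫 hI, Real.log_mul (Finset.prod_ne_zero_iff.mpr hq) hN,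
    Real.log_prod hq]
  simp [Real.log_pow]

noncomputable def localCoeff (𝔫 v : Ideal (𝓞 F)) : ℝ :=
  if ordv F v 𝔫 = 2 then -(qv F v ^ 2 - qv F v)⁻¹ else -(qv F v ^ 2)⁻¹

theorem Ntrans_log_summand (h𝔫 : 𝔫 ≠ 0) (hI : I ⊆ S F (nOne F 𝔫)) :
    (-1 : ℝ) ^ I.card * (∏ v ∈ I ∩ Sk F 1 (nOne F 𝔫), omegav F v (nZero F 𝔫)) *
        (iota F (idealDiv F 𝔫 (∏ v ∈ I, v ^ 2)) / iota F 𝔫) *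
        Real.log (Ideal.absNorm (idealDiv F 𝔫 (∏ v ∈ I, v ^ 2))) =
      (∏ v ∈ I, localCoeff 𝔫 v) *
        (Real.log (Ideal.absNorm 𝔫) - ∑ v ∈ I, 2 * Real.log (qv F v)) := by
  rw [iota_idealDiv_div_iota h𝔫 hI, log_absNorm_idealDiv h𝔫 hI, ← Finset.filter_mem_eq_inter,
    Finset.prod_filter, ← Finset.prod_const, ← Finset.prod_mul_distrib, ← Finset.prod_mul_distrib]
  congr 1
  refine Finset.prod_congr rfl fun v hv => ?_
  have h2 := mem_S_nOne.mp (hI hv)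
  have hq := two_le_qv (prime_of_mem_S (hI hv))
  have hq1 : qv F v - 1 ≠ 0 := by linarith
  simp only [localCoeff, mem_Sk_one_nOne, omegav, mem_S_nZero]
  split_ifs <;> first | omega | field_simp

theorem neg_one_lt_localCoeff (hv : Prime v) : -1 < localCoeff 𝔫 v := by
  have hq := two_le_qv hv
  rw [localCoeff]
  split_ifs
  · exact neg_lt_neg (inv_lt_one_of_one_lt₀ (by nlinarith))
  · exact neg_lt_neg (inv_lt_one_of_one_lt₀ (by nlinarith))

theorem one_add_localCoeff :
    1 + localCoeff 𝔫 v =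
      if ordv F v 𝔫 = 2 then 1 - (qv F v ^ 2 - qv F v)⁻¹ else 1 - qv F v ^ (-2 : ℤ) := by
  rw [localCoeff]
  split_ifs <;> simp [sub_eq_add_neg]

theorem inv_div_one_sub_inv {K : Type*} [Field K] {x : K} (hx : x ≠ 0) (hx1 : x - 1 ≠ 0) :
    x⁻¹ / (1 - x⁻¹) = (x - 1)⁻¹ := by
  grind

theorem localCoeff_div_one_add_localCoeff (hv : Prime v) :
    -(localCoeff 𝔫 v / (1 + localCoeff 𝔫 v)) =
      if ordv F v 𝔫 = 2 then (qv F v ^ 2 - qv F v - 1)⁻¹ else (qv F v ^ 2 - 1)⁻¹ := by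
  have hq := two_le_qv hv
  rw [localCoeff]
  split_ifs
  · rw [neg_div, neg_neg, ← sub_eq_add_neg, inv_div_one_sub_inv (by nlinarith) (by nlinarith)]
  · rw [neg_div, neg_neg, ← sub_eq_add_neg, inv_div_one_sub_inv (by positivity) (by nlinarith)]

end Ideals

variable (F)

theorem statement2
    (𝔫 : Ideal (𝓞 F)) (h𝔫 : 𝔫 ≠ 0) :
    Ntrans F (fun 𝔪 => Real.log (Ideal.absNorm 𝔪)) 𝔫 =
      (∏ v ∈ S F (nOne F 𝔫) \ Sk F 2 𝔫, (1 - (qv F v) ^ (-2 : ℤ))) *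
      (∏ v ∈ Sk F 2 𝔫, (1 - ((qv F v) ^ 2 - qv F v)⁻¹)) *
      (Real.log (Ideal.absNorm 𝔫) +
        (∑ v ∈ S F (nOne F 𝔫) \ Sk F 2 𝔫, 2 * Real.log (qv F v) / ((qv F v) ^ 2 - 1)) +
        (∑ v ∈ Sk F 2 𝔫, 2 * Real.log (qv F v) / ((qv F v) ^ 2 - qv F v - 1))) := by
  set T := S F (nOne F 𝔫)
  have hprod : ∏ v ∈ T, (1 + localCoeff 𝔫 v) =
      (∏ v ∈ T \ Sk F 2 𝔫, (1 - (qv F v) ^ (-2 : ℤ))) *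
        (∏ v ∈ Sk F 2 𝔫, (1 - ((qv F v) ^ 2 - qv F v)⁻¹)) := by
    rw [Finset.prod_congr rfl fun v _ => one_add_localCoeff, Finset.prod_ite, Sk_two_eq_filter,
      Finset.filter_not, mul_comm]
  have hsum : -∑ v ∈ T, 2 * Real.log (qv F v) * localCoeff 𝔫 v / (1 + localCoeff 𝔫 v) =
      (∑ v ∈ T \ Sk F 2 𝔫, 2 * Real.log (qv F v) / ((qv F v) ^ 2 - 1)) +
        (∑ v ∈ Sk F 2 𝔫, 2 * Real.log (qv F v) / ((qv F v) ^ 2 - qv F v - 1)) := by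
    rw [← Finset.sum_neg_distrib, Finset.sum_congr rfl fun v hv => by
      rw [mul_div_assoc, ← mul_neg, localCoeff_div_one_add_localCoeff (prime_of_mem_S hv), mul_ite,
        ← div_eq_mul_inv, ← div_eq_mul_inv]]
    rw [Finset.sum_ite, Sk_two_eq_filter, Finset.filter_not, add_comm]
  have hc : ∀ v ∈ T, 1 + localCoeff 𝔫 v ≠ 0 := fun v hv => by
    linarith [neg_one_lt_localCoeff (𝔫 := 𝔫) (prime_of_mem_S hv)]
  rw [Ntrans, Finset.sum_congr rfl fun I hI => Ntrans_log_summand h𝔫 (Finset.mem_powerset.mp hI),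
    sum_powerset_prod_mul_sub_sum _ _ _ _ hc, sub_eq_add_neg, hsum, hprod, add_assoc]

end Stmt2
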